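/- Assume φ̄ ∈ C²([0,1];𝓗) solves the MEP problem and assumption (A) is satisfied. Then there exist constants 0 < c ≤ C, depending only on E and φ̄, such that c ≤ |λ̄(α) / (α(α−s̄)(α−1))| ≤ C for all α ∈ (0,s̄) ∪ (s̄,1). -/

import Mathlib

noncomputable section

open Set
open scoped RealInnerProductSpace Topology

variable {H : Type*} [NormedAddCommGroup H] [InnerProductSpace ℝ H] [CompleteSpace H]

/-- Orthogonal projection of `y` onto the span of `v` (`P_v y`). -/
def Pproj (v y : H) : H := ⟪y, ‖v‖⁻¹ • v⟫ • (‖v‖⁻¹ • v)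

/-- Projection of `y` onto the orthogonal complement of `v` (`P_v^⊥ y`). -/
def Pperp (v y : H) : H := y - Pproj v y

/-- `f` is `C¹` on `[a,b]` with derivative `f'`. -/
def C1On {F : Type*} [NormedAddCommGroup F] [NormedSpace ℝ F] (a b : ℝ) (f f' : ℝ → F) : Prop :=
  (∀ α ∈ Icc a b, HasDerivWithinAt f (f' α) (Icc a b) α) ∧ ContinuousOn f' (Icc a b)

/-- `f` is `C²` on `[a,b]`. -/
def C2On {F : Type*} [NormedAddCommGroup F] [NormedSpace ℝ F] (a b : ℝ) (f f' f'' : ℝ → F) : Prop :=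
  C1On a b f f' ∧ C1On a b f' f''

/-- The length `L(φ)` of a curve with derivative `φ'`. -/
def len {F : Type*} [NormedAddCommGroup F] (φ' : ℝ → F) : ℝ := ∫ s in (0:ℝ)..1, ‖φ' s‖

/-- `Γ(φ)(α) = ∫₀^α |φ'| − α L(φ)`. -/
def Gam {F : Type*} [NormedAddCommGroup F] (φ' : ℝ → F) (α : ℝ) : ℝ :=
  (∫ s in (0:ℝ)..α, ‖φ' s‖) - α * len φ'

/-- The admissible class `U` of regular curves joining `yA` to `yB`. -/
def InU (yA yB : H) (φ φ' : ℝ → H) : Prop :=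
  C1On 0 1 φ φ' ∧ φ 0 = yA ∧ φ 1 = yB ∧ ∀ α ∈ Icc (0:ℝ) 1, φ' α ≠ 0

/-- The MEP equations. -/
def SolvesMEP (E : H → ℝ) (φ φ' : ℝ → H) : Prop :=
  (∀ α ∈ Icc (0:ℝ) 1, Pperp (φ' α) (gradient E (φ α)) = 0) ∧
  (∀ α ∈ Icc (0:ℝ) 1, Gam φ' α = 0)

/-- Strong local minimizer. -/
def IsStrongMin (E : H → ℝ) (hess : H → H →L[ℝ] H) (y : H) : Prop :=
  gradient E y = 0 ∧ ∃ c > 0, ∀ u : H, c * ‖u‖ ^ 2 ≤ ⟪hess y u, u⟫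

/-- Index-1 saddle point. -/
def IsIndex1Saddle (E : H → ℝ) (hess : H → H →L[ℝ] H) (y : H) : Prop :=
  gradient E y = 0 ∧
    ∃ v₁ : H, v₁ ≠ 0 ∧ (∃ l < (0:ℝ), hess y v₁ = l • v₁) ∧
      ∃ c > 0, ∀ u : H, ⟪u, v₁⟫ = 0 → c * ‖u‖ ^ 2 ≤ ⟪hess y u, u⟫

/-- Assumption (A). -/
def AssumpA (E : H → ℝ) (hess : H → H →L[ℝ] H) (yA yB : H)
    (φb φb' φb'' : ℝ → H) (sbar : ℝ) : Prop :=
  C2On 0 1 φb φb' φb'' ∧ InU yA yB φb φb' ∧ SolvesMEP E φb φb' ∧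
  sbar ∈ Ioo (0:ℝ) 1 ∧
  IsStrongMin E hess yA ∧ IsStrongMin E hess yB ∧
  IsIndex1Saddle E hess (φb sbar) ∧
  ∀ α ∈ Icc (0:ℝ) 1, gradient E (φb α) = 0 → α = 0 ∨ α = sbar ∨ α = 1

/-- `λ̄(α) = L(φ̄)⁻² (∇E(φ̄(α)), φ̄'(α))`. -/
def lamBar (E : H → ℝ) (φ φ' : ℝ → H) (α : ℝ) : ℝ :=
  ((len φ') ^ 2)⁻¹ * ⟪gradient E (φ α), φ' α⟫

/-- The MEP operator `𝓕`. -/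
def Fop (E : H → ℝ) (sbar σA σB : ℝ) (φ φ' : ℝ → H) (α : ℝ) : H :=
  Pperp (φ' α) (gradient E (φ α))
    - ((‖φ' α‖ - len φ') / len φ') • Pproj (φ' α) (gradient E (φ α))
    + (α * (α - 1) * ‖φ' α‖ / (sbar * (sbar - 1) * len φ')) •
        Pproj (φ' α) (gradient E (φ sbar))
    + ((σA + σB) * (Gam φ' α - α * (α - 1) / (sbar * (sbar - 1)) * Gam φ' sbar)) •
        (‖φ' α‖⁻¹ • φ' α)

/-- Membership in the image space `Y`. -/
def MemY {F : Type*} [NormedAddCommGroup F] [NormedSpace ℝ F] (sbar : ℝ) (f : ℝ → F) : Prop :=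
  ContinuousOn f (Icc (0:ℝ) 1) ∧ f 0 = 0 ∧ f 1 = 0 ∧
  DifferentiableWithinAt ℝ f (Icc (0:ℝ) 1) 0 ∧
  DifferentiableWithinAt ℝ f (Icc (0:ℝ) 1) sbar ∧
  DifferentiableWithinAt ℝ f (Icc (0:ℝ) 1) 1

/-- Membership in the space `X`. -/
def MemX {F : Type*} [NormedAddCommGroup F] [NormedSpace ℝ F] (ψ ψ' : ℝ → F) : Prop :=
  C1On 0 1 ψ ψ' ∧ ψ 0 = 0 ∧ ψ 1 = 0

/-- The `C¹` (and `X`) norm. -/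
def normC1 {F : Type*} [NormedAddCommGroup F] (ψ ψ' : ℝ → F) : ℝ :=
  (⨆ α : Icc (0:ℝ) 1, ‖ψ (α : ℝ)‖) + ⨆ α : Icc (0:ℝ) 1, ‖ψ' (α : ℝ)‖

/-- The weighted norm on `Y`. -/
def normY {F : Type*} [NormedAddCommGroup F] (sbar : ℝ) (f : ℝ → F) : ℝ :=
  (⨆ α : Ioo (0:ℝ) 1, ‖f (α : ℝ)‖ / |(α : ℝ) * ((α : ℝ) - 1)|) +
    ⨆ α : ↥(Icc (0:ℝ) 1 \ {sbar}), ‖f (α : ℝ) - f sbar‖ / |(α : ℝ) - sbar|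

/-- `∫₀¹ (φ̄'(s), ψ'(s))/|φ̄'(s)| ds`. -/
def gInt (φb' ψ' : ℝ → H) : ℝ := ∫ s in (0:ℝ)..1, ⟪φb' s, ψ' s⟫ / ‖φb' s‖

/-- `g_ψ(α)` (the linearisation `δΓ(φ̄)ψ`). -/
def gFun (φb' ψ' : ℝ → H) (α : ℝ) : ℝ :=
  (∫ s in (0:ℝ)..α, ⟪φb' s, ψ' s⟫ / ‖φb' s‖) - α * gInt φb' ψ'

/-- `g_ψ'(α)`. -/
def gFun' (φb' ψ' : ℝ → H) (α : ℝ) : ℝ := ⟪φb' α, ψ' α⟫ / ‖φb' α‖ - gInt φb' ψ'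

/-- The linearised MEP operator `T = δ𝓕(φ̄)`. -/
def Tlin (E : H → ℝ) (hess : H → H →L[ℝ] H) (φb φb' : ℝ → H)
    (sbar σA σB : ℝ) (ψ ψ' : ℝ → H) (α : ℝ) : H :=
  Pperp (φb' α) (hess (φb α) (ψ α) - lamBar E φb φb' α • ψ' α)
    + (α * (α - 1) / (sbar * (sbar - 1))) • Pproj (φb' α) (hess (φb sbar) (ψ sbar))
    + ((σA + σB) * (gFun φb' ψ' α - α * (α - 1) / (sbar * (sbar - 1)) * gFun φb' ψ' sbar)
        - lamBar E φb φb' α * gFun' φb' ψ' α) • (‖φb' α‖⁻¹ • φb' α)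

/-- Assumption (B). -/
def AssumpB (hess : H → H →L[ℝ] H) (yA yB vA vB : H) (σA σB : ℝ) : Prop :=
  hess yA vA = σA • vA ∧ hess yB vB = σB • vB ∧
  (∀ μ ∈ spectrum ℝ (hess yA), σA ≤ μ) ∧
  (∀ μ ∈ spectrum ℝ (hess yB), σB ≤ μ) ∧
  (∃ ε > 0, ∀ μ ∈ spectrum ℝ (hess yA), μ ≠ σA → σA + ε ≤ μ) ∧
  (∃ ε > 0, ∀ μ ∈ spectrum ℝ (hess yB), μ ≠ σB → σB + ε ≤ μ) ∧
  (∀ u : H, hess yA u = σA • u → ∃ c : ℝ, u = c • vA) ∧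
  (∀ u : H, hess yB u = σB • u → ∃ c : ℝ, u = c • vB)

/-- `P_v` as a continuous linear map. -/
def projL (v : H) : H →L[ℝ] H := (innerSL ℝ (‖v‖⁻¹ • v)).smulRight (‖v‖⁻¹ • v)

/-- `P_v^⊥` as a continuous linear map. -/
def projPerpL (v : H) : H →L[ℝ] H := ContinuousLinearMap.id ℝ H - projL v

/-- `B(α) = P⊥ ∇²E(φ̄(α)) P⊥`. -/
def Bop (hess : H → H →L[ℝ] H) (φb φb' : ℝ → H) (α : ℝ) : H →L[ℝ] H :=
  (projPerpL (φb' α)).comp ((hess (φb α)).comp (projPerpL (φb' α)))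

/-- `D(α) y = −(y,t'(α))t(α) − (y,t(α))t'(α)`. -/
def Dop (t t' : ℝ → H) (α : ℝ) : H →L[ℝ] H :=
  -((innerSL ℝ (t' α)).smulRight (t α)) - (innerSL ℝ (t α)).smulRight (t' α)

/-- The operator `A(α)`. -/
def Aop {K : Type*} [NormedAddCommGroup K] [InnerProductSpace ℝ K] [CompleteSpace K]
    (E : H → ℝ) (hess : H → H →L[ℝ] H) (φb φb' t' : ℝ → H)
    (Q Q' : ℝ → K →L[ℝ] H) (α : ℝ) : K →L[ℝ] K :=
  (ContinuousLinearMap.adjoint (Q α)).comp ((Bop hess φb φb' α).comp (Q α))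
    - lamBar E φb φb' α •
        ((ContinuousLinearMap.adjoint (Q α)).comp
            ((Dop (fun s => ‖φb' s‖⁻¹ • φb' s) t' α).comp (Q α))
          - (ContinuousLinearMap.adjoint (Q α)).comp (Q' α))

/-- `ω_S`. -/
def omegaS (hess : H → H →L[ℝ] H) (yS : H) : ℝ :=
  sInf {l : ℝ | l ∈ spectrum ℝ (hess yS) ∧ 0 < l}

/-- `ω_B`. -/
def omegaB (hess : H → H →L[ℝ] H) (yB : H) (σB : ℝ) : ℝ :=
  sInf {l : ℝ | l ∈ spectrum ℝ (hess yB) ∧ l ≠ σB}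

/-- The tube `𝒰_ε` around the path. -/
def Utube (φb : ℝ → H) (ε : ℝ) : Set H := {y : H | ∃ α ∈ Icc (0:ℝ) 1, ‖y - φb α‖ ≤ ε}

/-- Restriction of a second derivative to a subspace. -/
def restrict2 (K : Submodule ℝ H) (T : H →L[ℝ] H →L[ℝ] ℝ) : K →L[ℝ] K →L[ℝ] ℝ :=
  (((ContinuousLinearMap.compL ℝ K H ℝ).flip K.subtypeL)).comp (T.comp K.subtypeL)

/-- `C⁰` distance between `E'` (on the subspace `K`) and `E`, over `S`. -/
def subC0dist (K : Submodule ℝ H) (E : H → ℝ) (E' : K → ℝ) (S : Set K) : ℝ :=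
  ⨆ y : S, |E' y.1 - E (y.1 : H)|

/-- `C¹` distance between `E'` (on the subspace `K`) and `E`, over `S`. -/
def subC1dist (K : Submodule ℝ H) (E : H → ℝ) (E' : K → ℝ) (S : Set K) : ℝ :=
  subC0dist K E E' S +
    ⨆ y : S, ‖fderiv ℝ E' y.1 - (fderiv ℝ E (y.1 : H)).comp K.subtypeL‖

/-- `C²` distance between `E'` (on the subspace `K`) and `E`, over `S`. -/
def subC2dist (K : Submodule ℝ H) (E : H → ℝ) (E' : K → ℝ) (S : Set K) : ℝ :=
  subC1dist K E E' S +
    ⨆ y : S, @Norm.norm (K →L[ℝ] K →L[ℝ] ℝ)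
        (@ContinuousLinearMap.hasOpNorm ℝ ℝ K (K →L[ℝ] ℝ) _ _ _ _ _ _ _)
        (fderiv ℝ (fun z => fderiv ℝ E' z) y.1
        - restrict2 K (fderiv ℝ (fun z => fderiv ℝ E z) (y.1 : H)))

/-!
Write `f α = ⟪∇E(φ̄ α), φ̄' α⟫`, so that `λ̄ = L(φ̄)⁻² f`. The MEP equation makes `∇E(φ̄ α)`
parallel to `φ̄' α`, so `f` vanishes exactly at the critical parameters `0, s̄, 1`. At such a
parameter `p`, differentiating `∇E ∘ φ̄ = (f / ‖φ̄'‖²) • φ̄'` shows that `φ̄' p` is an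
eigenvector of `∇²E(φ̄ p)`. This Hessian is injective at a strong minimum and at an index-1
saddle, hence `f' p = ⟪∇²E(φ̄ p) (φ̄' p), φ̄' p⟫ ≠ 0`. Thus `|f α / (α (α - s̄) (α - 1))|` has
positive limits at `0, s̄, 1` and is continuous and positive elsewhere on `[0, 1]`; compactness
of `[0, 1]` bounds it above and away from zero.
-/

open Filter

theorem tendsto_div_of_hasDerivWithinAt {𝕜 : Type*} [NontriviallyNormedField 𝕜]
    {f q : 𝕜 → 𝕜} {s : Set 𝕜} {p f' q' : 𝕜}
    (hf : HasDerivWithinAt f f' s p) (hq : HasDerivWithinAt q q' s p)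
    (hfp : f p = 0) (hqp : q p = 0) (hq' : q' ≠ 0) :
    Tendsto (fun x => f x / q x) (𝓝[s \ {p}] p) (𝓝 (f' / q')) := by
  have hslope := (hasDerivWithinAt_iff_tendsto_slope.mp hf).div
    (hasDerivWithinAt_iff_tendsto_slope.mp hq) hq'
  refine hslope.congr' (eventually_nhdsWithin_of_forall fun x hx => ?_)
  have hxp : x - p ≠ 0 := sub_ne_zero.mpr hx.2
  rw [Pi.div_apply, slope_def_field, slope_def_field, hfp, hqp, sub_zero, sub_zero]
  exact div_div_div_cancel_right₀ hxp _ _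

theorem IsCompact.exists_pos_bounds_of_tendsto {X : Type*} [TopologicalSpace X]
    {K D : Set X} {g : X → ℝ} (hK : IsCompact K)
    (hg : ∀ x ∈ K, ∃ l > 0, Tendsto g (𝓝[D] x) (𝓝 l)) :
    ∃ m M : ℝ, 0 < m ∧ m ≤ M ∧ ∀ x ∈ K ∩ D, m ≤ g x ∧ g x ≤ M := by
  refine hK.induction_on
    (p := fun S => ∃ m M : ℝ, 0 < m ∧ m ≤ M ∧ ∀ x ∈ S ∩ D, m ≤ g x ∧ g x ≤ M)
    ⟨1, 1, one_pos, le_rfl, by simp⟩ ?_ ?_ ?_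
  · rintro S T hST ⟨m, M, hm, hmM, h⟩
    exact ⟨m, M, hm, hmM, fun x hx => h x ⟨hST hx.1, hx.2⟩⟩
  · rintro S T ⟨m, M, hm, hmM, hS⟩ ⟨m', M', hm', -, hT⟩
    refine ⟨min m m', max M M', lt_min hm hm', (min_le_left _ _).trans (hmM.trans
      (le_max_left _ _)), ?_⟩
    rintro x ⟨hx | hx, hxD⟩
    · obtain ⟨h₁, h₂⟩ := hS x ⟨hx, hxD⟩
      exact ⟨(min_le_left _ _).trans h₁, h₂.trans (le_max_left _ _)⟩
    · obtain ⟨h₁, h₂⟩ := hT x ⟨hx, hxD⟩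
      exact ⟨(min_le_right _ _).trans h₁, h₂.trans (le_max_right _ _)⟩
  · intro x hx
    obtain ⟨l, hl, hlim⟩ := hg x hx
    have hev : ∀ᶠ y in 𝓝[D] x, l / 2 < g y ∧ g y < l + 1 :=
      (hlim.eventually (lt_mem_nhds (half_lt_self hl))).and
        (hlim.eventually (gt_mem_nhds (lt_add_one l)))
    rw [eventually_nhdsWithin_iff] at hev
    exact ⟨_, mem_nhdsWithin_of_mem_nhds hev, l / 2, l + 1, half_pos hl, by linarith,
      fun y hy => ⟨(hy.1 hy.2).1.le, (hy.1 hy.2).2.le⟩⟩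

theorem Ioo_union_Ioo_eq_Icc_sdiff {α : Type*} [LinearOrder α] {a b c : α} (hab : a ≤ b)
    (hbc : b ≤ c) : Ioo a b ∪ Ioo b c = Icc a c \ {a, b, c} := by
  ext x
  simp only [mem_union, mem_Ioo, Set.mem_sdiff, mem_Icc, mem_insert_iff, mem_singleton_iff,
    not_or]
  constructor
  · rintro (⟨h₁, h₂⟩ | ⟨h₁, h₂⟩)
    · exact ⟨⟨h₁.le, h₂.le.trans hbc⟩, h₁.ne', h₂.ne, (h₂.trans_le hbc).ne⟩
    · exact ⟨⟨hab.trans h₁.le, h₂.le⟩, (hab.trans_lt h₁).ne', h₁.ne', h₂.ne⟩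
  · rintro ⟨⟨h₁, h₂⟩, ha, hb, hc⟩
    rcases lt_or_gt_of_ne hb with h | h
    exacts [.inl ⟨lt_of_le_of_ne h₁ (Ne.symm ha), h⟩, .inr ⟨h, lt_of_le_of_ne h₂ hc⟩]

theorem hasDerivAt_mul_sub_mul_sub {𝕜 : Type*} [NontriviallyNormedField 𝕜] (a b x : 𝕜) :
    HasDerivAt (fun y => y * (y - a) * (y - b))
      ((x - a) * (x - b) + x * (x - b) + x * (x - a)) x :=
  (((hasDerivAt_id' x).mul ((hasDerivAt_id' x).sub_const a)).mul
    ((hasDerivAt_id' x).sub_const b)).congr_deriv (by simp only [Pi.mul_apply]; ring)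

theorem inner_apply_self_ne_zero_of_eq_smul {V : Type*} [NormedAddCommGroup V]
    [InnerProductSpace ℝ V] {T : V →L[ℝ] V} (hT : Function.Injective T) {w : V} {μ : ℝ}
    (hμ : T w = μ • w) (hw : w ≠ 0) : ⟪T w, w⟫ ≠ 0 := by
  have hμ0 : μ ≠ 0 := by
    rintro rfl
    exact hw (hT (by rw [hμ, zero_smul, map_zero]))
  rw [hμ, real_inner_smul_left, real_inner_self_eq_norm_sq]
  exact mul_ne_zero hμ0 (pow_ne_zero 2 (norm_ne_zero_iff.mpr hw))

theorem len_pos {F : Type*} [NormedAddCommGroup F] {φ' : ℝ → F}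
    (hcont : ContinuousOn φ' (Icc 0 1)) (hne : ∀ α ∈ Icc (0:ℝ) 1, φ' α ≠ 0) :
    0 < len φ' :=
  intervalIntegral.intervalIntegral_pos_of_pos_on
    ((hcont.norm.mono (by rw [uIcc_of_le zero_le_one])).intervalIntegrable)
    (fun x hx => norm_pos_iff.mpr (hne x ⟨hx.1.le, hx.2.le⟩)) one_pos

theorem eq_smul_of_Pperp_eq_zero {V : Type*} [NormedAddCommGroup V] [InnerProductSpace ℝ V]
    {v y : V} (h : Pperp v y = 0) :
    y = (⟪y, v⟫ / ‖v‖ ^ 2) • v := by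
  rw [Pperp, sub_eq_zero, Pproj] at h
  refine h.trans ?_
  rw [real_inner_smul_right, smul_smul]
  congr 1
  rcases eq_or_ne v 0 with rfl | hv
  · simp
  · field_simp

theorem isSymmetric_hess {E : H → ℝ} (hE : Differentiable ℝ E) {hess : H → H →L[ℝ] H}
    (hhess : ∀ y, HasFDerivAt (gradient E) (hess y) y) (y : H) :
    (hess y : H →ₗ[ℝ] H).IsSymmetric := by
  set J := (InnerProductSpace.toDual ℝ H).toContinuousLinearEquiv.toContinuousLinearMap
  have hfderiv : (fun x => fderiv ℝ E x) = fun x => J (gradient E x) := by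
    funext x
    simp [J, gradient]
  have h2 : HasFDerivAt (fun x => fderiv ℝ E x) (J.comp (hess y)) y := by
    rw [hfderiv]
    exact J.hasFDerivAt.comp y (hhess y)
  intro u v
  have hsymm := second_derivative_symmetric (fun x => (hE x).hasFDerivAt) h2 u v
  simp only [J, ContinuousLinearMap.comp_apply,
    ContinuousLinearEquiv.coe_coe, LinearIsometryEquiv.coe_toContinuousLinearEquiv,
    InnerProductSpace.toDual_apply_apply] at hsymm
  simp only [ContinuousLinearMap.coe_coe]
  rw [hsymm, real_inner_comm]

theorem IsStrongMin.injective_hess {E : H → ℝ} {hess : H → H →L[ℝ] H} {y : H}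
    (h : IsStrongMin E hess y) : Function.Injective (hess y) := by
  obtain ⟨-, c, hc, hcoer⟩ := h
  refine (injective_iff_map_eq_zero (hess y)).mpr fun w hw => ?_
  by_contra hw0
  have := hcoer w
  rw [hw, inner_zero_left] at this
  exact this.not_gt (mul_pos hc (pow_pos (norm_pos_iff.mpr hw0) 2))

theorem IsIndex1Saddle.injective_hess {E : H → ℝ} {hess : H → H →L[ℝ] H} {y : H}
    (h : IsIndex1Saddle E hess y) (hsymm : (hess y : H →ₗ[ℝ] H).IsSymmetric) :
    Function.Injective (hess y) := by
  obtain ⟨-, v₁, -, ⟨l, hl, hv₁⟩, c, hc, hcoer⟩ := h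
  refine (injective_iff_map_eq_zero (hess y)).mpr fun w hw => ?_
  have horth : ⟪w, v₁⟫ = 0 := by
    have h0 : ⟪w, hess y v₁⟫ = 0 := by simpa [hw] using (hsymm w v₁).symm
    rw [hv₁, real_inner_smul_right] at h0
    exact (mul_eq_zero.mp h0).resolve_left hl.ne
  by_contra hw0
  have := hcoer w horth
  rw [hw, inner_zero_left] at this
  exact this.not_gt (mul_pos hc (pow_pos (norm_pos_iff.mpr hw0) 2))

section Path

variable {E : H → ℝ} {hess : H → H →L[ℝ] H} {φ φ' φ'' : ℝ → H} {s : Set ℝ} {p : ℝ}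

theorem hasDerivWithinAt_inner_gradient_comp
    (hhess : ∀ y, HasFDerivAt (gradient E) (hess y) y)
    (hφ : HasDerivWithinAt φ (φ' p) s p) (hφ' : HasDerivWithinAt φ' (φ'' p) s p) :
    HasDerivWithinAt (fun α => ⟪gradient E (φ α), φ' α⟫)
      (⟪gradient E (φ p), φ'' p⟫ + ⟪hess (φ p) (φ' p), φ' p⟫) s p :=
  ((hhess (φ p)).comp_hasDerivWithinAt p hφ).inner ℝ hφ'

theorem exists_hess_apply_eq_smul (hhess : ∀ y, HasFDerivAt (gradient E) (hess y) y)
    (hperp : ∀ α ∈ s, Pperp (φ' α) (gradient E (φ α)) = 0)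
    (hφ : HasDerivWithinAt φ (φ' p) s p) (hφ' : HasDerivWithinAt φ' (φ'' p) s p)
    (hs : UniqueDiffWithinAt ℝ s p) (hp : p ∈ s) (hcrit : gradient E (φ p) = 0)
    (hne : φ' p ≠ 0) :
    ∃ μ : ℝ, hess (φ p) (φ' p) = μ • φ' p := by
  set m : ℝ → ℝ := fun α => ⟪gradient E (φ α), φ' α⟫ / ‖φ' α‖ ^ 2
  have hm : DifferentiableWithinAt ℝ m s p :=
    (hasDerivWithinAt_inner_gradient_comp hhess hφ hφ').differentiableWithinAt.div
      (DifferentiableWithinAt.norm_sq ℝ hφ'.differentiableWithinAt)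
      (pow_ne_zero 2 (norm_ne_zero_iff.mpr hne))
  have hm0 : m p = 0 := by simp only [m, hcrit, inner_zero_left, zero_div]
  have hmφ' : HasDerivWithinAt (fun α => m α • φ' α) (derivWithin m s p • φ' p) s p := by
    have h := hm.hasDerivWithinAt.smul hφ'
    rwa [hm0, zero_smul, zero_add] at h
  exact ⟨derivWithin m s p, hs.eq_deriv _ ((hhess (φ p)).comp_hasDerivWithinAt p hφ)
    (hmφ'.congr (fun α hα => eq_smul_of_Pperp_eq_zero (hperp α hα))
      (eq_smul_of_Pperp_eq_zero (hperp p hp)))⟩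

theorem exists_tendsto_abs_inner_gradient_div_of_gradient_eq_zero
    (hhess : ∀ y, HasFDerivAt (gradient E) (hess y) y)
    (hperp : ∀ α ∈ s, Pperp (φ' α) (gradient E (φ α)) = 0)
    (hφ : HasDerivWithinAt φ (φ' p) s p) (hφ' : HasDerivWithinAt φ' (φ'' p) s p)
    (hs : UniqueDiffWithinAt ℝ s p) (hp : p ∈ s) (hcrit : gradient E (φ p) = 0)
    (hne : φ' p ≠ 0) (hinj : Function.Injective (hess (φ p)))
    {q : ℝ → ℝ} {q' : ℝ} (hq : HasDerivWithinAt q q' s p) (hqp : q p = 0) (hq' : q' ≠ 0) :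
    ∃ l > 0, Tendsto (fun α => |⟪gradient E (φ α), φ' α⟫ / q α|) (𝓝[s \ {p}] p) (𝓝 l) := by
  obtain ⟨μ, hμ⟩ := exists_hess_apply_eq_smul hhess hperp hφ hφ' hs hp hcrit hne
  have hd := hasDerivWithinAt_inner_gradient_comp hhess hφ hφ'
  rw [hcrit, inner_zero_left, zero_add] at hd
  exact ⟨_, abs_pos.mpr (div_ne_zero (inner_apply_self_ne_zero_of_eq_smul hinj hμ hne) hq'),
    (tendsto_div_of_hasDerivWithinAt hd hq (by simp [hcrit]) hqp hq').abs⟩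

theorem exists_tendsto_abs_inner_gradient_div_of_gradient_ne_zero
    (hhess : ∀ y, HasFDerivAt (gradient E) (hess y) y)
    (hperp : ∀ α ∈ s, Pperp (φ' α) (gradient E (φ α)) = 0)
    (hφ : HasDerivWithinAt φ (φ' p) s p) (hφ' : HasDerivWithinAt φ' (φ'' p) s p)
    (hp : p ∈ s) (hgrad : gradient E (φ p) ≠ 0)
    {q : ℝ → ℝ} (hq : ContinuousWithinAt q s p) (hqp : q p ≠ 0) :
    ∃ l > 0, Tendsto (fun α => |⟪gradient E (φ α), φ' α⟫ / q α|) (𝓝[s] p) (𝓝 l) := by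
  have hf : ⟪gradient E (φ p), φ' p⟫ ≠ 0 := by
    intro hf
    apply hgrad
    rw [eq_smul_of_Pperp_eq_zero (hperp p hp), hf, zero_div, zero_smul]
  have hcont := (hasDerivWithinAt_inner_gradient_comp hhess hφ hφ').continuousWithinAt
  exact ⟨_, abs_pos.mpr (div_ne_zero hf hqp), (hcont.div hq hqp).abs.tendsto⟩

theorem exists_tendsto_abs_inner_gradient_div_cubic {b : ℝ} (hb : b ∈ Ioo (0:ℝ) 1)
    (hhess : ∀ y, HasFDerivAt (gradient E) (hess y) y)
    (hperp : ∀ α ∈ Icc (0:ℝ) 1, Pperp (φ' α) (gradient E (φ α)) = 0)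
    (hφ : ∀ α ∈ Icc (0:ℝ) 1, HasDerivWithinAt φ (φ' α) (Icc 0 1) α)
    (hφ' : ∀ α ∈ Icc (0:ℝ) 1, HasDerivWithinAt φ' (φ'' α) (Icc 0 1) α)
    (hne : ∀ α ∈ Icc (0:ℝ) 1, φ' α ≠ 0)
    (hcrit : ∀ α ∈ Icc (0:ℝ) 1, gradient E (φ α) = 0 ↔ α ∈ ({0, b, 1} : Set ℝ))
    (hinj : ∀ α ∈ ({0, b, 1} : Set ℝ), Function.Injective (hess (φ α))) :
    ∀ x ∈ Icc (0:ℝ) 1, ∃ l > 0,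
      Tendsto (fun α => |⟪gradient E (φ α), φ' α⟫ / (α * (α - b) * (α - 1))|)
        (𝓝[Ioo 0 b ∪ Ioo b 1] x) (𝓝 l) := by
  intro x hx
  have hD := Ioo_union_Ioo_eq_Icc_sdiff hb.1.le hb.2.le
  have hq := hasDerivAt_mul_sub_mul_sub b 1 x
  by_cases hxZ : x ∈ ({0, b, 1} : Set ℝ)
  · have hqx : x * (x - b) * (x - 1) = 0 := by rcases hxZ with rfl | rfl | rfl <;> ring
    have hq' : (x - b) * (x - 1) + x * (x - 1) + x * (x - b) ≠ 0 := by
      rcases hxZ with rfl | rfl | rfl <;> intro h <;>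
        nlinarith [mul_pos hb.1 (sub_pos.2 hb.2), hb.1, hb.2]
    obtain ⟨l, hl, hlim⟩ := exists_tendsto_abs_inner_gradient_div_of_gradient_eq_zero hhess
      hperp (hφ x hx) (hφ' x hx) (uniqueDiffOn_Icc one_pos x hx) hx ((hcrit x hx).2 hxZ)
      (hne x hx) (hinj x hxZ) hq.hasDerivWithinAt hqx hq'
    exact ⟨l, hl, tendsto_nhdsWithin_mono_left
      (hD ▸ sdiff_subset_sdiff_right (singleton_subset_iff.mpr hxZ)) hlim⟩
  · obtain ⟨l, hl, hlim⟩ := exists_tendsto_abs_inner_gradient_div_of_gradient_ne_zero hhess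
      hperp (hφ x hx) (hφ' x hx) hx (fun h => hxZ ((hcrit x hx).1 h))
      hq.continuousAt.continuousWithinAt (by simpa [sub_eq_zero, not_or, and_assoc] using hxZ)
    exact ⟨l, hl, tendsto_nhdsWithin_mono_left (hD ▸ sdiff_subset) hlim⟩

end Path

theorem stmt8
    (E : H → ℝ) (hE : ContDiff ℝ 3 E)
    (hess : H → H →L[ℝ] H) (hhess : ∀ y : H, HasFDerivAt (gradient E) (hess y) y)
    (yA yB : H) (φb φb' φb'' : ℝ → H) (sbar : ℝ)
    (hA : AssumpA E hess yA yB φb φb' φb'' sbar) :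
    ∃ c C : ℝ, 0 < c ∧ c ≤ C ∧
      ∀ α ∈ Ioo (0:ℝ) sbar ∪ Ioo sbar 1,
        c ≤ |lamBar E φb φb' α / (α * (α - sbar) * (α - 1))| ∧
        |lamBar E φb φb' α / (α * (α - sbar) * (α - 1))| ≤ C := by
  obtain ⟨⟨-, hφ'C1⟩, ⟨hφC1, hφ0, hφ1, hφ'ne⟩, ⟨hperp, -⟩, hsbar, hminA, hminB, hsad,
    hcrit⟩ := hA
  have hcrit' : ∀ α ∈ Icc (0:ℝ) 1, gradient E (φb α) = 0 ↔ α ∈ ({0, sbar, 1} : Set ℝ) := by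
    refine fun α hα => ⟨hcrit α hα, ?_⟩
    rintro (rfl | rfl | rfl)
    exacts [hφ0 ▸ hminA.1, hsad.1, hφ1 ▸ hminB.1]
  have hinj : ∀ α ∈ ({0, sbar, 1} : Set ℝ), Function.Injective (hess (φb α)) := by
    rintro α (rfl | rfl | rfl)
    exacts [hφ0 ▸ hminA.injective_hess,
      hsad.injective_hess (isSymmetric_hess (hE.differentiable (by norm_num)) hhess _),
      hφ1 ▸ hminB.injective_hess]
  obtain ⟨m, M, hm, hmM, hbounds⟩ := isCompact_Icc.exists_pos_bounds_of_tendsto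
    (exists_tendsto_abs_inner_gradient_div_cubic hsbar hhess hperp hφC1.1 hφ'C1.1 hφ'ne
      hcrit' hinj)
  have hL : 0 < (len φb' ^ 2)⁻¹ := by have := len_pos hφC1.2 hφ'ne; positivity
  refine ⟨(len φb' ^ 2)⁻¹ * m, (len φb' ^ 2)⁻¹ * M, mul_pos hL hm, by gcongr, fun α hα => ?_⟩
  have hαI : α ∈ Icc (0:ℝ) 1 := by
    rcases hα with ⟨h₀, h₁⟩ | ⟨h₀, h₁⟩ <;> constructor <;> linarith [hsbar.1, hsbar.2]
  obtain ⟨hmα, hMα⟩ := hbounds α ⟨hαI, hα⟩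
  rw [lamBar, mul_div_assoc, abs_mul, abs_of_pos hL]
  exact ⟨by gcongr, by gcongr⟩
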